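/- arXiv:2512.22053 — 3 statements merged into one kernel-verified Lean document; each statement's English description precedes it below -/
import Mathlib

section
/- Let A(t) be an n×n real matrix function of class C¹ on [a,b] with det A(t) ≠ 0 for t ∈ (a,b). Suppose det A(a) = det A(b) = 0 and there exist nonzero reals h_a, h_b and positive integers ν_a, ν_b such that det A(a+t) = h_a |t|^{ν_a} + o(|t|^{ν_a}) and det A(b+t) = h_b |t|^{ν_b} + o(|t|^{ν_b}) as |t| → 0 (within the domain). Let ν = max(ν_a, ν_b) and fix α > 0, γ > 0, κ > 0. Then there exists λ > 0, depending only on A, α, γ and κ, such that for every continuous ℝⁿ-valued function r on [a,b] satisfying ‖r‖_{i,a,b} ≥ α‖r‖_{a,b}, |A(t)r(t)| ≤ κ(t−a)^ν ‖r‖_{a,b} for t ∈ [a, a+γ), and |A(t)r(t)| ≤ κ(b−t)^ν ‖r‖_{a,b} for t ∈ (b−γ, b], one has ‖Ar‖_{i,a,b} ≥ λ‖r‖_{i,a,b}. -/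
open Set Filter Asymptotics Topology MeasureTheory

/-- Euclidean norm of a vector in `ℝⁿ`. -/
noncomputable def euclNorm {n : ℕ} (v : Fin n → ℝ) : ℝ := Real.sqrt (∑ i, v i ^ 2)

/-- `‖q‖_{a,b} = max_{t ∈ [a,b]} |q(t)|`. -/
noncomputable def supNorm {n : ℕ} (a b : ℝ) (q : ℝ → Fin n → ℝ) : ℝ :=
  sSup ((fun t => euclNorm (q t)) '' Set.Icc a b)

/-- `‖q‖_{i,a,b} = ∫_a^b |q(t)| dt`. -/
noncomputable def intNorm {n : ℕ} (a b : ℝ) (q : ℝ → Fin n → ℝ) : ℝ :=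
  ∫ t in a..b, euclNorm (q t)

open scoped Matrix

/-! Away from the endpoints `A` is invertible with a uniformly bounded inverse, so there
`|r| ≤ C |A r|`. The hypothesis `‖r‖_{i,a,b} ≥ α ‖r‖_{a,b}` prevents `r` from concentrating
near the endpoints: the two end intervals of length `δ ≤ α / 4` carry at most
`2 δ ‖r‖_{a,b} ≤ ‖r‖_{i,a,b} / 2` of the mass, so `λ = 1 / (2 C)` works. -/

lemma euclNorm_nonneg {n : ℕ} (v : Fin n → ℝ) : 0 ≤ euclNorm v := Real.sqrt_nonneg _

lemma continuous_euclNorm {n : ℕ} : Continuous (euclNorm (n := n)) :=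
  Real.continuous_sqrt.comp (continuous_finsetSum _ fun i _ => (continuous_apply i).pow 2)

lemma euclNorm_mulVec_le {n : ℕ} (M : Matrix (Fin n) (Fin n) ℝ) (v : Fin n → ℝ) :
    euclNorm (M *ᵥ v) ≤ Real.sqrt (∑ i, ∑ j, M i j ^ 2) * euclNorm v := by
  unfold euclNorm
  rw [← Real.sqrt_mul (by positivity), Finset.sum_mul]
  exact Real.sqrt_le_sqrt <| Finset.sum_le_sum fun i _ => by
    simpa only [Matrix.mulVec, dotProduct] using Finset.sum_mul_sq_le_sq_mul_sq _ (M i) v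

lemma euclNorm_le_supNorm {n : ℕ} {a b t : ℝ} {r : ℝ → Fin n → ℝ}
    (hr : ContinuousOn r (Icc a b)) (ht : t ∈ Icc a b) : euclNorm (r t) ≤ supNorm a b r :=
  le_csSup ((isCompact_Icc.image_of_continuousOn
    (continuous_euclNorm.comp_continuousOn hr)).bddAbove) ⟨t, ht, rfl⟩

lemma ContinuousOn.matrix_inv {X 𝕜 ι : Type*} [TopologicalSpace X] [NontriviallyNormedField 𝕜]
    [Fintype ι] [DecidableEq ι] {A : X → Matrix ι ι 𝕜} {s : Set X} (hA : ContinuousOn A s)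
    (hdet : ∀ x ∈ s, (A x).det ≠ 0) : ContinuousOn (fun x => (A x)⁻¹) s := fun x hx =>
  (continuousAt_matrix_inv _ (by rw [Ring.inverse_eq_inv']; exact continuousAt_inv₀ (hdet x hx))
    ).comp_continuousWithinAt (hA x hx)

lemma exists_euclNorm_le_mul_euclNorm_mulVec {n : ℕ} {A : ℝ → Matrix (Fin n) (Fin n) ℝ}
    {K : Set ℝ} (hK : IsCompact K) (hA : ContinuousOn A K) (hdet : ∀ t ∈ K, (A t).det ≠ 0) :
    ∃ C > 0, ∀ t ∈ K, ∀ v, euclNorm v ≤ C * euclNorm (A t *ᵥ v) := by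
  set F : ℝ → ℝ := fun t => Real.sqrt (∑ i, ∑ j, (A t)⁻¹ i j ^ 2)
  have hF : ContinuousOn F K := by
    have hinv := hA.matrix_inv hdet
    exact Real.continuous_sqrt.comp_continuousOn <| continuousOn_finsetSum _ fun i _ =>
      continuousOn_finsetSum _ fun j _ =>
        (((continuous_apply j).comp (continuous_apply i)).comp_continuousOn hinv).pow 2
  obtain ⟨C, hC⟩ := hK.exists_bound_of_continuousOn hF
  refine ⟨max C 1, by positivity, fun t ht v => ?_⟩
  have hFC : F t ≤ max C 1 := (le_abs_self _).trans ((hC t ht).trans (le_max_left _ _))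
  calc euclNorm v = euclNorm ((A t)⁻¹ *ᵥ (A t *ᵥ v)) := by
        rw [Matrix.mulVec_mulVec, Matrix.nonsing_inv_mul _ (hdet t ht).isUnit,
          Matrix.one_mulVec]
    _ ≤ F t * euclNorm (A t *ᵥ v) := euclNorm_mulVec_le _ _
    _ ≤ max C 1 * euclNorm (A t *ᵥ v) := by gcongr; exact euclNorm_nonneg _

lemma integral_le_mul_of_le {g : ℝ → ℝ} {c d M : ℝ} (hcd : c ≤ d)
    (hg : ContinuousOn g (Icc c d)) (hgM : ∀ t ∈ Icc c d, g t ≤ M) :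
    ∫ t in c..d, g t ≤ (d - c) * M := by
  calc ∫ t in c..d, g t ≤ ∫ _ in c..d, M :=
        intervalIntegral.integral_mono_on hcd (hg.intervalIntegrable_of_Icc hcd)
          intervalIntegrable_const hgM
    _ = (d - c) * M := by rw [intervalIntegral.integral_const, smul_eq_mul]

lemma integral_le_two_mul_add_mul_integral {g h : ℝ → ℝ} {a b δ M C : ℝ} (hδ : 0 ≤ δ)
    (hδab : a + δ ≤ b - δ) (hg : ContinuousOn g (Icc a b)) (hh : ContinuousOn h (Icc a b))
    (hgM : ∀ t ∈ Icc a b, g t ≤ M) (hh0 : ∀ t ∈ Icc a b, 0 ≤ h t) (hC : 0 ≤ C)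
    (hgh : ∀ t ∈ Icc (a + δ) (b - δ), g t ≤ C * h t) :
    ∫ t in a..b, g t ≤ 2 * δ * M + C * ∫ t in a..b, h t := by
  have hgi : ∀ c d, a ≤ c → c ≤ d → d ≤ b → IntervalIntegrable g volume c d :=
    fun _ _ hc hcd hd => (hg.mono (Icc_subset_Icc hc hd)).intervalIntegrable_of_Icc hcd
  have hsplit : ∫ t in a..b, g t =
      (∫ t in a..a + δ, g t) + (∫ t in a + δ..b - δ, g t) + ∫ t in b - δ..b, g t := by
    rw [intervalIntegral.integral_add_adjacent_intervals
        (hgi a (a + δ) le_rfl (by linarith) (by linarith))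
        (hgi _ _ (by linarith) hδab (by linarith)),
      intervalIntegral.integral_add_adjacent_intervals
        (hgi a (b - δ) le_rfl (by linarith) (by linarith))
        (hgi _ b (by linarith) (by linarith) le_rfl)]
  have hleft : ∫ t in a..a + δ, g t ≤ δ * M := by
    have hδb : a + δ ≤ b := by linarith
    simpa using integral_le_mul_of_le (by linarith) (hg.mono (Icc_subset_Icc le_rfl hδb))
      fun t ht => hgM t (Icc_subset_Icc le_rfl hδb ht)
  have hright : ∫ t in b - δ..b, g t ≤ δ * M := by
    have hδa : a ≤ b - δ := by linarith
    simpa using integral_le_mul_of_le (by linarith) (hg.mono (Icc_subset_Icc hδa le_rfl))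
      fun t ht => hgM t (Icc_subset_Icc hδa le_rfl ht)
  have hmid : ∫ t in a + δ..b - δ, g t ≤ C * ∫ t in a + δ..b - δ, h t := by
    rw [← intervalIntegral.integral_const_mul]
    have hhi : IntervalIntegrable h volume (a + δ) (b - δ) :=
      (hh.mono (Icc_subset_Icc (by linarith) (by linarith))).intervalIntegrable_of_Icc hδab
    exact intervalIntegral.integral_mono_on hδab (hgi _ _ (by linarith) hδab (by linarith))
      (hhi.const_mul C) hgh
  have hhmono : ∫ t in a + δ..b - δ, h t ≤ ∫ t in a..b, h t :=
    intervalIntegral.integral_mono_interval (by linarith) hδab (by linarith)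
      (ae_restrict_of_forall_mem measurableSet_Ioc fun t ht => hh0 t (Ioc_subset_Icc_self ht))
      (hh.intervalIntegrable_of_Icc (by linarith))
  linarith [mul_le_mul_of_nonneg_left hhmono hC]

theorem stmt2_general (n : ℕ) (a b : ℝ) (hab : a < b)
    (A : ℝ → Matrix (Fin n) (Fin n) ℝ)
    (hA : ∀ i j, ContDiffOn ℝ 1 (fun t => A t i j) (Set.Icc a b))
    (hdet : ∀ t ∈ Set.Ioo a b, (A t).det ≠ 0)
    (νa νb : ℕ)
    (α γ κ : ℝ) (hα : 0 < α) :
    ∃ lam > 0, ∀ r : ℝ → Fin n → ℝ, ContinuousOn r (Set.Icc a b) →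
      intNorm a b r ≥ α * supNorm a b r →
      (∀ t, a ≤ t → t < a + γ → t ≤ b →
        euclNorm ((A t).mulVec (r t)) ≤ κ * (t - a) ^ max νa νb * supNorm a b r) →
      (∀ t, b - γ < t → t ≤ b → a ≤ t →
        euclNorm ((A t).mulVec (r t)) ≤ κ * (b - t) ^ max νa νb * supNorm a b r) →
      (∫ t in a..b, euclNorm ((A t).mulVec (r t))) ≥ lam * intNorm a b r := by
  set δ := min (α / 4) ((b - a) / 2)
  have hδ : 0 < δ := lt_min (by positivity) (by linarith)
  have hδα : δ ≤ α / 4 := min_le_left _ _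
  have hδab : a + δ ≤ b - δ := by linarith [min_le_right (α / 4) ((b - a) / 2)]
  have hinner : Icc (a + δ) (b - δ) ⊆ Ioo a b := fun t ht =>
    ⟨by linarith [ht.1], by linarith [ht.2]⟩
  have hAcont : ContinuousOn A (Icc a b) :=
    continuousOn_pi.2 fun i => continuousOn_pi.2 fun j => (hA i j).continuousOn
  obtain ⟨C, hC, hrC⟩ := exists_euclNorm_le_mul_euclNorm_mulVec isCompact_Icc
    (hAcont.mono (hinner.trans Ioo_subset_Icc_self)) fun t ht => hdet t (hinner ht)
  refine ⟨1 / (2 * C), by positivity, fun r hr hrα _ _ => ?_⟩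
  have hM0 : 0 ≤ supNorm a b r :=
    (euclNorm_nonneg _).trans (euclNorm_le_supNorm hr (left_mem_Icc.2 hab.le))
  have hArcont : ContinuousOn (fun t => A t *ᵥ r t) (Icc a b) :=
    (continuous_fst.matrix_mulVec continuous_snd).comp_continuousOn (hAcont.prodMk hr)
  have hmass := integral_le_two_mul_add_mul_integral (g := fun t => euclNorm (r t))
    (h := fun t => euclNorm (A t *ᵥ r t)) hδ.le hδab
    (continuous_euclNorm.comp_continuousOn hr) (continuous_euclNorm.comp_continuousOn hArcont)
    (fun t ht => euclNorm_le_supNorm hr ht) (fun t _ => euclNorm_nonneg _) hC.le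
    (fun t ht => hrC t ht (r t))
  have hδM : δ * supNorm a b r ≤ α / 4 * supNorm a b r := by gcongr
  unfold intNorm at hrα ⊢
  rw [ge_iff_le, one_div_mul_eq_div, div_le_iff₀ (by positivity)]
  linarith

theorem stmt2 (n : ℕ) (a b : ℝ) (hab : a < b)
    (A : ℝ → Matrix (Fin n) (Fin n) ℝ)
    (hA : ∀ i j, ContDiffOn ℝ 1 (fun t => A t i j) (Set.Icc a b))
    (hdet : ∀ t ∈ Set.Ioo a b, (A t).det ≠ 0)
    (hdeta : (A a).det = 0) (hdetb : (A b).det = 0)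
    (ha hb : ℝ) (hha : ha ≠ 0) (hhb : hb ≠ 0)
    (νa νb : ℕ) (hνa : 0 < νa) (hνb : 0 < νb)
    (hasyma : (fun t => (A (a + t)).det - ha * |t| ^ νa) =o[𝓝[>] (0 : ℝ)] fun t => |t| ^ νa)
    (hasymb : (fun t => (A (b + t)).det - hb * |t| ^ νb) =o[𝓝[<] (0 : ℝ)] fun t => |t| ^ νb)
    (α γ κ : ℝ) (hα : 0 < α) (hγ : 0 < γ) (hκ : 0 < κ) :
    ∃ lam > 0, ∀ r : ℝ → Fin n → ℝ, ContinuousOn r (Set.Icc a b) →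
      intNorm a b r ≥ α * supNorm a b r →
      (∀ t, a ≤ t → t < a + γ → t ≤ b →
        euclNorm ((A t).mulVec (r t)) ≤ κ * (t - a) ^ max νa νb * supNorm a b r) →
      (∀ t, b - γ < t → t ≤ b → a ≤ t →
        euclNorm ((A t).mulVec (r t)) ≤ κ * (b - t) ^ max νa νb * supNorm a b r) →
      (∫ t in a..b, euclNorm ((A t).mulVec (r t))) ≥ lam * intNorm a b r :=
  stmt2_general n a b hab A hA hdet νa νb α γ κ hα
end

section
/- Let A(t) be an n×l real matrix function of class C¹ on an interval [0,δ] with l ≤ n, and set B(t) = A(t)ᵀA(t). Suppose there exists h > 0 such that det B(t) = h² t² + o(t²) as t → 0+. Then the zero eigenvalue of the positive semidefinite symmetric matrix B(0) is simple; equivalently, the kernel of B(0) (which equals the kernel of A(0)) is one-dimensional. -/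
open Set Filter Asymptotics Topology Matrix Finset

/-!
Diagonalise `B 0 = (A 0)ᵀ * A 0` by an orthogonal matrix `U`: the columns of `A 0 * U` indexed by
the zero eigenvalues vanish, and there are `k = dim ker (A 0)` of them. As `A` is differentiable
at `0`, these columns of `A t * U` are `O(t)`, so in the Gram matrix `(A t * U)ᵀ * (A t * U)`,
whose determinant is `det (B t)`, entry `(i, j)` carries one factor `t` for each of `i, j` in this
set; expanding the determinant over permutations gives `det (B t) = O(t ^ (2 * k))`. Against
`det (B t) ~ h ^ 2 * t ^ 2` this forces `k ≤ 1`, while `det (B 0) = 0` by continuity gives `k ≥ 1`.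
-/

section DetAsymptotics

variable {α ι R : Type*} [NormedCommRing R] {L : Filter α}

theorem Matrix.det_isBigO_pow_sum [Fintype ι] [DecidableEq ι] {M : α → Matrix ι ι R}
    {f : α → ℝ} (a b : ι → ℕ) (hM : ∀ i j, (fun x => M x i j) =O[L] fun x => f x ^ (a i + b j)) :
    (fun x => (M x).det) =O[L] fun x => f x ^ (∑ i, a i + ∑ j, b j) := by
  simp only [det_apply']
  refine IsBigO.fun_sum fun σ _ => IsBigO.const_mul_left ?_ _
  have hexp : ∀ x, ∏ i, f x ^ (a (σ i) + b i) = f x ^ (∑ i, a i + ∑ j, b j) := fun x => by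
    rw [prod_pow_eq_pow_sum, sum_add_distrib, Equiv.sum_comp σ a]
  simpa only [hexp] using IsBigO.finsetProd (s := univ) fun i _ => hM (σ i) i

theorem Matrix.transpose_mul_self_isBigO_pow {m : Type*} [Fintype m] {W : α → Matrix m ι R}
    {f : α → ℝ} (w : ι → ℕ) (hW : ∀ i j, (fun x => W x i j) =O[L] fun x => f x ^ w j)
    (j k : ι) : (fun x => ((W x)ᵀ * W x) j k) =O[L] fun x => f x ^ (w j + w k) := by
  simp only [mul_apply, transpose_apply, pow_add]
  exact IsBigO.fun_sum fun i _ => (hW i j).mul (hW i k)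

theorem Matrix.det_transpose_mul_self_isBigO_pow {m : Type*} [Fintype m] [Fintype ι]
    [DecidableEq ι] {W : α → Matrix m ι R} {f : α → ℝ} (w : ι → ℕ)
    (hW : ∀ i j, (fun x => W x i j) =O[L] fun x => f x ^ w j) :
    (fun x => ((W x)ᵀ * W x).det) =O[L] fun x => f x ^ (2 * ∑ j, w j) := by
  simpa only [two_mul] using det_isBigO_pow_sum w w (transpose_mul_self_isBigO_pow w hW)

end DetAsymptotics

section GramDeterminant

variable {m ι : Type*} [Fintype m] [Fintype ι] [DecidableEq ι]

theorem Matrix.det_transpose_mul_self_isBigO_pow_card {s : Set ℝ} {W : ℝ → Matrix m ι ℝ}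
    (hW : ∀ i j, DifferentiableWithinAt ℝ (fun t => W t i j) s 0) (S : Finset ι)
    (hS : ∀ i, ∀ j ∈ S, W 0 i j = 0) :
    (fun t => ((W t)ᵀ * W t).det) =O[𝓝[s] 0] fun t => t ^ (2 * #S) := by
  have hcard : ∑ j, (if j ∈ S then 1 else 0) = #S := by simp
  rw [← hcard]
  refine det_transpose_mul_self_isBigO_pow _ fun i j => ?_
  split_ifs with hj
  · simpa [hS i j hj] using (hW i j).isBigO_sub
  · simpa using (hW i j).continuousWithinAt.tendsto.isBigO_one ℝ

theorem Matrix.det_transpose_mul_self_mul_of_orthogonal {R : Type*} [CommRing R]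
    (A : Matrix m ι R) {U : Matrix ι ι R} (hU : Uᵀ * U = 1) :
    ((A * U)ᵀ * (A * U)).det = (Aᵀ * A).det := by
  have hdetU : U.det * U.det = 1 := by simpa using congrArg det hU
  rw [transpose_mul, Matrix.mul_assoc, ← Matrix.mul_assoc Aᵀ, det_mul, det_mul, det_transpose]
  linear_combination (Aᵀ * A).det * hdetU

theorem Matrix.IsHermitian.card_eigenvalues_eq_zero {A : Matrix ι ι ℝ} (hA : A.IsHermitian) :
    #{j | hA.eigenvalues j = 0} = Module.finrank ℝ (LinearMap.ker A.mulVecLin) := by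
  have h := LinearMap.finrank_range_add_finrank_ker A.mulVecLin
  rw [← rank, hA.rank_eq_card_non_zero_eigs, Module.finrank_fintype_fun_eq_card,
    Fintype.card_subtype] at h
  have := card_filter_add_card_filter_not (s := univ) (fun j => hA.eigenvalues j = 0)
  rw [card_univ] at this
  simp only [ne_eq] at h
  omega

theorem Matrix.mul_eigenvectorUnitary_apply_of_eigenvalues_eq_zero (A : Matrix m ι ℝ)
    (hA : (Aᵀ * A).IsHermitian) {j : ι} (hj : hA.eigenvalues j = 0) (i : m) :
    (A * (hA.eigenvectorUnitary : Matrix ι ι ℝ)) i j = 0 := by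
  have hker : ⇑(hA.eigenvectorBasis j) ∈ LinearMap.ker A.mulVecLin := by
    rw [← ker_mulVecLin_transpose_mul_self, LinearMap.mem_ker, mulVecLin_apply,
      hA.mulVec_eigenvectorBasis, hj, zero_smul]
  rw [LinearMap.mem_ker, mulVecLin_apply] at hker
  simpa [mul_apply, mulVec, dotProduct] using congrFun hker i

theorem Matrix.continuousWithinAt_det_transpose_mul_self {X : Type*} [TopologicalSpace X]
    {A : X → Matrix m ι ℝ} {s : Set X} {x : X}
    (hA : ∀ i j, ContinuousWithinAt (fun t => A t i j) s x) :
    ContinuousWithinAt (fun t => ((A t)ᵀ * A t).det) s x := by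
  have hA' : ContinuousWithinAt A s x :=
    continuousWithinAt_pi.2 fun i => continuousWithinAt_pi.2 (hA i)
  have hdet : Continuous fun M : Matrix m ι ℝ => (Mᵀ * M).det :=
    (continuous_id.matrix_transpose.matrix_mul continuous_id).matrix_det
  exact hdet.continuousAt.comp_continuousWithinAt hA'

theorem Matrix.finrank_ker_mulVecLin_pos {K : Type*} [Field K] {M : Matrix ι ι K}
    (hM : M.det = 0) : 0 < Module.finrank K (LinearMap.ker M.mulVecLin) := by
  obtain ⟨v, hv, hMv⟩ := exists_mulVec_eq_zero_iff.mpr hM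
  exact Module.finrank_pos_iff_exists_ne_zero.mpr ⟨⟨v, hMv⟩, fun h0 => hv congr($h0.1)⟩

theorem Matrix.det_transpose_mul_self_isBigO_pow_finrank_ker {s : Set ℝ}
    {A : ℝ → Matrix m ι ℝ} (hA : ∀ i j, DifferentiableWithinAt ℝ (fun t => A t i j) s 0) :
    (fun t => ((A t)ᵀ * A t).det) =O[𝓝[s] 0]
      fun t => t ^ (2 * Module.finrank ℝ (LinearMap.ker (A 0).mulVecLin)) := by
  have hH : ((A 0)ᵀ * A 0).IsHermitian := by
    simpa [conjTranspose_eq_transpose_of_trivial] using isHermitian_conjTranspose_mul_self (A 0)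
  set U : Matrix ι ι ℝ := (hH.eigenvectorUnitary : Matrix ι ι ℝ)
  have hU : Uᵀ * U = 1 := by
    simpa [star_eq_conjTranspose, conjTranspose_eq_transpose_of_trivial] using
      Unitary.coe_star_mul_self hH.eigenvectorUnitary
  rw [← ker_mulVecLin_transpose_mul_self, ← hH.card_eigenvalues_eq_zero]
  simp_rw [← det_transpose_mul_self_mul_of_orthogonal (A _) hU]
  refine det_transpose_mul_self_isBigO_pow_card (W := fun t => A t * U) (fun i j => ?_) _
    fun i j hj => mul_eigenvectorUnitary_apply_of_eigenvalues_eq_zero (A 0) hH (by simpa using hj) i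
  simp only [mul_apply]
  fun_prop

end GramDeterminant

theorem le_of_pow_isBigO_pow_nhdsGT_zero {a b : ℕ}
    (h : (fun t : ℝ => t ^ a) =O[𝓝[>] 0] fun t => t ^ b) : b ≤ a := by
  by_contra! hab
  refine isLittleO_irrefl (l := 𝓝[>] (0:ℝ)) (f'' := fun t : ℝ => t ^ a) ?_ ?_
  · exact (eventually_nhdsWithin_of_forall (s := Ioi 0) fun t ht => (pow_pos ht a).ne').frequently
  · exact h.trans_isLittleO ((isLittleO_pow_pow hab).mono nhdsWithin_le_nhds)

theorem stmt12_general (n l : ℕ) (δ : ℝ) (hδ : 0 < δ)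
    (A : ℝ → Matrix (Fin n) (Fin l) ℝ)
    (hA : ∀ i j, ContDiffOn ℝ 1 (fun t => A t i j) (Set.Icc 0 δ))
    (B : ℝ → Matrix (Fin l) (Fin l) ℝ) (hB : ∀ t, B t = (A t)ᵀ * A t)
    (h : ℝ) (hh : 0 < h)
    (hasym : (fun t => (B t).det - h ^ 2 * t ^ 2) =o[𝓝[>] (0 : ℝ)] fun t => t ^ 2) :
    Module.finrank ℝ (LinearMap.ker (Matrix.mulVecLin (B 0))) = 1 ∧
    LinearMap.ker (Matrix.mulVecLin (B 0)) = LinearMap.ker (Matrix.mulVecLin (A 0)) := by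
  have hker : LinearMap.ker (B 0).mulVecLin = LinearMap.ker (A 0).mulVecLin := by
    rw [hB]; exact ker_mulVecLin_transpose_mul_self _
  have hdiff : ∀ i j, DifferentiableWithinAt ℝ (fun t => A t i j) (Icc 0 δ) 0 := fun i j =>
    (hA i j).differentiableOn one_ne_zero 0 ⟨le_rfl, hδ.le⟩
  have hGT : 𝓝[>] (0 : ℝ) ≤ 𝓝[Icc 0 δ] 0 := by
    rw [← nhdsWithin_Ioo_eq_nhdsGT hδ]; exact nhdsWithin_mono _ Ioo_subset_Icc_self
  have hequiv : (fun t => (B t).det) ~[𝓝[>] 0] fun t => h ^ 2 * t ^ 2 :=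
    hasym.trans_isBigO (isBigO_self_const_mul (by positivity) _ _)
  have hdet0 : (B 0).det = 0 := by
    have hsq : Continuous fun t : ℝ => h ^ 2 * t ^ 2 := by fun_prop
    refine tendsto_nhds_unique (f := fun t => (B t).det) ?_
      (hequiv.symm.tendsto_nhds ((hsq.tendsto' 0 0 (by simp)).mono_left nhdsWithin_le_nhds))
    simpa only [hB] using (continuousWithinAt_det_transpose_mul_self fun i j =>
      (hdiff i j).continuousWithinAt).tendsto.mono_left hGT
  have hupper : (fun t => (B t).det) =O[𝓝[>] 0]
      fun t => t ^ (2 * Module.finrank ℝ (LinearMap.ker (A 0).mulVecLin)) := by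
    simpa only [hB] using (det_transpose_mul_self_isBigO_pow_finrank_ker hdiff).mono hGT
  have hle := le_of_pow_isBigO_pow_nhdsGT_zero
    ((isBigO_self_const_mul (by positivity) _ _).trans (hequiv.symm.isBigO.trans hupper))
  have hpos : 0 < Module.finrank ℝ (LinearMap.ker (A 0).mulVecLin) :=
    hker ▸ finrank_ker_mulVecLin_pos hdet0
  refine ⟨?_, hker⟩
  rw [hker]
  omega

theorem stmt12 (n l : ℕ) (hln : l ≤ n) (δ : ℝ) (hδ : 0 < δ)
    (A : ℝ → Matrix (Fin n) (Fin l) ℝ)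
    (hA : ∀ i j, ContDiffOn ℝ 1 (fun t => A t i j) (Set.Icc 0 δ))
    (B : ℝ → Matrix (Fin l) (Fin l) ℝ) (hB : ∀ t, B t = (A t)ᵀ * A t)
    (h : ℝ) (hh : 0 < h)
    (hasym : (fun t => (B t).det - h ^ 2 * t ^ 2) =o[𝓝[>] (0 : ℝ)] fun t => t ^ 2) :
    Module.finrank ℝ (LinearMap.ker (Matrix.mulVecLin (B 0))) = 1 ∧
    LinearMap.ker (Matrix.mulVecLin (B 0)) = LinearMap.ker (Matrix.mulVecLin (A 0)) :=
  stmt12_general n l δ hδ A hA B hB h hh hasym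
end

section
/- Let A(t) be an n×n real matrix function of class C¹ on [0,1] with det A(t) > 0 for t ∈ (0,1), det A(0) = det A(1) = 0, and suppose there exist h₀ > 0, h₁ > 0 and positive integers ν₀, ν₁ such that det A(t) = h₀ t^{ν₀} + o(t^{ν₀}) as t → 0+ and det A(1−t) = h₁ t^{ν₁} + o(t^{ν₁}) as t → 0+. Let ν = max(ν₀, ν₁). Then there exist M > 0 and δ ∈ (0,1) such that for every c ∈ (0,δ): min_{t∈[c,1−c]} det A(t) ≥ M c^ν. -/
open Set Filter Asymptotics Topology

/-!
Near `0` the asymptotics give `det A(t) ≥ (h₀/2) t^ν₀`, and near `1` they give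
`det A(t) ≥ (h₁/2) (1-t)^ν₁`; on the compact middle interval the continuous positive function
`det A` is bounded below by a positive constant. For `t ∈ [c, 1-c]` with `c ≤ 1` each of these
bounds dominates a multiple of `c^ν`, because `c ≤ t`, `c ≤ 1 - t` and `c^ν ≤ c^νᵢ`.
-/

lemma Asymptotics.IsLittleO.eventually_mul_le {α : Type*} {l : Filter α} {f g : α → ℝ}
    {h k : ℝ} (hfg : (fun x => f x - h * g x) =o[l] g) (hg : ∀ᶠ x in l, 0 ≤ g x) (hk : k < h) :
    ∀ᶠ x in l, k * g x ≤ f x := by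
  filter_upwards [hfg.def (sub_pos.2 hk), hg] with x hx hgx
  rw [Real.norm_eq_abs, Real.norm_eq_abs, abs_of_nonneg hgx] at hx
  linarith [(abs_le.1 hx).1]

lemma exists_Ioo_forall_of_eventually_nhdsGT {α : Type*} [LinearOrder α] [TopologicalSpace α]
    [OrderTopology α] {a ε : α} (hε : a < ε) {p : α → Prop} (h : ∀ᶠ t in 𝓝[>] a, p t) :
    ∃ δ, a < δ ∧ δ ≤ ε ∧ ∀ t ∈ Ioo a δ, p t := by
  obtain ⟨u, hu, hsub⟩ := (mem_nhdsGT_iff_exists_Ioo_subset' hε).1 h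
  exact ⟨min u ε, lt_min hu hε, min_le_right _ _,
    fun t ht => hsub ⟨ht.1, ht.2.trans_le (min_le_left _ _)⟩⟩

lemma pow_le_pow_of_le_of_le_one {c t : ℝ} {k m : ℕ} (hc : 0 ≤ c) (hc₁ : c ≤ 1) (hct : c ≤ t)
    (hkm : k ≤ m) : c ^ m ≤ t ^ k :=
  (pow_le_pow_of_le_one hc hc₁ hkm).trans (pow_le_pow_left₀ hc hct k)

lemma continuousOn_matrix_det {X R ι : Type*} [TopologicalSpace X] [CommRing R]
    [TopologicalSpace R] [IsTopologicalRing R] [Fintype ι] [DecidableEq ι] {A : X → Matrix ι ι R}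
    {s : Set X} (hA : ∀ i j, ContinuousOn (fun x => A x i j) s) :
    ContinuousOn (fun x => (A x).det) s :=
  continuous_id.matrix_det.comp_continuousOn
    (continuousOn_pi.2 fun i => continuousOn_pi.2 fun j => hA i j)

theorem exists_pow_le_on_Icc_of_growth_at_endpoints {f : ℝ → ℝ} (hf : ContinuousOn f (Icc 0 1))
    (hpos : ∀ t ∈ Ioo (0 : ℝ) 1, 0 < f t) {a b : ℝ} (ha : 0 < a) (hb : 0 < b) {ν₀ ν₁ : ℕ}
    (h₀ : ∀ᶠ t in 𝓝[>] 0, a * t ^ ν₀ ≤ f t) (h₁ : ∀ᶠ t in 𝓝[>] 0, b * t ^ ν₁ ≤ f (1 - t)) :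
    ∃ M > 0, ∃ δ : ℝ, 0 < δ ∧ δ < 1 ∧
      ∀ c : ℝ, 0 < c → c < δ → ∀ t ∈ Icc c (1 - c), M * c ^ max ν₀ ν₁ ≤ f t := by
  obtain ⟨δ₀, hδ₀, hδ₀_le, near₀⟩ :=
    exists_Ioo_forall_of_eventually_nhdsGT (by norm_num : (0 : ℝ) < 1 / 2) h₀
  obtain ⟨δ₁, hδ₁, hδ₁_le, near₁⟩ :=
    exists_Ioo_forall_of_eventually_nhdsGT (by norm_num : (0 : ℝ) < 1 / 2) h₁
  have hmid : Icc δ₀ (1 - δ₁) ⊆ Ioo 0 1 := fun t ht => ⟨hδ₀.trans_le ht.1, by linarith [ht.2]⟩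
  obtain ⟨m, hm, middle⟩ := isCompact_Icc.exists_forall_le'
    (hf.mono (hmid.trans Ioo_subset_Icc_self)) fun t ht => hpos t (hmid ht)
  refine ⟨min (min a b) m, by positivity, min δ₀ δ₁, lt_min hδ₀ hδ₁, by
    linarith [min_le_left δ₀ δ₁], fun c hc hcδ t ht => ?_⟩
  have hcδ₀ : c < δ₀ := hcδ.trans_le (min_le_left _ _)
  have hcδ₁ : c < δ₁ := hcδ.trans_le (min_le_right _ _)
  have hc₁ : c ≤ 1 := by linarith
  rcases lt_or_ge t δ₀ with ht₀ | ht₀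
  · calc min (min a b) m * c ^ max ν₀ ν₁ ≤ a * t ^ ν₀ :=
          mul_le_mul ((min_le_left _ _).trans (min_le_left _ _))
            (pow_le_pow_of_le_of_le_one hc.le hc₁ ht.1 (le_max_left _ _)) (by positivity) ha.le
      _ ≤ f t := near₀ t ⟨hc.trans_le ht.1, ht₀⟩
  rcases lt_or_ge (1 - t) δ₁ with ht₁ | ht₁
  · calc min (min a b) m * c ^ max ν₀ ν₁ ≤ b * (1 - t) ^ ν₁ :=
          mul_le_mul ((min_le_left _ _).trans (min_le_right _ _))
            (pow_le_pow_of_le_of_le_one hc.le hc₁ (by linarith [ht.2]) (le_max_right _ _))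
            (by positivity) hb.le
      _ ≤ f (1 - (1 - t)) := near₁ (1 - t) ⟨by linarith [ht.2], ht₁⟩
      _ = f t := by rw [sub_sub_cancel]
  · calc min (min a b) m * c ^ max ν₀ ν₁ ≤ m * 1 :=
          mul_le_mul (min_le_right _ _) (pow_le_one₀ hc.le hc₁) (by positivity) hm.le
      _ = m := mul_one m
      _ ≤ f t := middle t ⟨ht₀, by linarith⟩

theorem stmt17_general (n : ℕ) (A : ℝ → Matrix (Fin n) (Fin n) ℝ)
    (hA : ∀ i j, ContDiffOn ℝ 1 (fun t => A t i j) (Set.Icc 0 1))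
    (hpos : ∀ t ∈ Set.Ioo (0 : ℝ) 1, 0 < (A t).det)
    (h₀ h₁ : ℝ) (hh₀ : 0 < h₀) (hh₁ : 0 < h₁)
    (ν₀ ν₁ : ℕ)
    (hasym₀ : (fun t => (A t).det - h₀ * t ^ ν₀) =o[𝓝[>] (0 : ℝ)] fun t => t ^ ν₀)
    (hasym₁ : (fun t => (A (1 - t)).det - h₁ * t ^ ν₁) =o[𝓝[>] (0 : ℝ)] fun t => t ^ ν₁) :
    ∃ M > 0, ∃ δ : ℝ, 0 < δ ∧ δ < 1 ∧
      ∀ c : ℝ, 0 < c → c < δ → ∀ t ∈ Set.Icc c (1 - c),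
        (A t).det ≥ M * c ^ max ν₀ ν₁ := by
  have pow_nonneg_near_zero (ν : ℕ) : ∀ᶠ t : ℝ in 𝓝[>] 0, 0 ≤ t ^ ν :=
    eventually_nhdsWithin_of_forall fun t ht => pow_nonneg (le_of_lt ht) ν
  exact exists_pow_le_on_Icc_of_growth_at_endpoints
    (continuousOn_matrix_det fun i j => (hA i j).continuousOn) hpos
    (half_pos hh₀) (half_pos hh₁)
    (hasym₀.eventually_mul_le (pow_nonneg_near_zero ν₀) (half_lt_self hh₀))
    (hasym₁.eventually_mul_le (pow_nonneg_near_zero ν₁) (half_lt_self hh₁))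

theorem stmt17 (n : ℕ) (A : ℝ → Matrix (Fin n) (Fin n) ℝ)
    (hA : ∀ i j, ContDiffOn ℝ 1 (fun t => A t i j) (Set.Icc 0 1))
    (hpos : ∀ t ∈ Set.Ioo (0 : ℝ) 1, 0 < (A t).det)
    (hdet0 : (A 0).det = 0) (hdet1 : (A 1).det = 0)
    (h₀ h₁ : ℝ) (hh₀ : 0 < h₀) (hh₁ : 0 < h₁)
    (ν₀ ν₁ : ℕ) (hν₀ : 0 < ν₀) (hν₁ : 0 < ν₁)
    (hasym₀ : (fun t => (A t).det - h₀ * t ^ ν₀) =o[𝓝[>] (0 : ℝ)] fun t => t ^ ν₀)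
    (hasym₁ : (fun t => (A (1 - t)).det - h₁ * t ^ ν₁) =o[𝓝[>] (0 : ℝ)] fun t => t ^ ν₁) :
    ∃ M > 0, ∃ δ : ℝ, 0 < δ ∧ δ < 1 ∧
      ∀ c : ℝ, 0 < c → c < δ → ∀ t ∈ Set.Icc c (1 - c),
        (A t).det ≥ M * c ^ max ν₀ ν₁ :=
  stmt17_general n A hA hpos h₀ h₁ hh₀ hh₁ ν₀ ν₁ hasym₀ hasym₁
end
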